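/- Let β > 0, γ = β, ε ∈ (0,1), q > 1. Define d_k(u) = (k/((ln u)(ln ln u)^{1/β}))^{1/β}, δ₁(u) = (1/(2 ln u − q ln ln u))^{1/β}, and M_ε(u) = max{k ∈ ℕ : d_k(u) ≤ (1−ε)δ₁(u)}. Then (ln u)^{1/β} · d_{M_ε(u)+1}(u) → (1−ε)·2^{−1/β} as u → ∞. -/

import Mathlib

open Filter

noncomputable def dk (β u : ℝ) (k : ℕ) : ℝ :=
  ((k : ℝ) / (Real.log u * Real.log (Real.log u) ^ (1 / β))) ^ (1 / β)

noncomputable def delta1 (γ q u : ℝ) : ℝ :=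
  (1 / (2 * Real.log u - q * Real.log (Real.log u))) ^ (1 / γ)

/-!
With `c = 1 - ε`, raising `d_k(u) ≤ c δ₁(u)` to the power `β` turns it into `k ≤ A(u)` with
`A(u) = c^β (ln u)(ln ln u)^{1/β} / (2 ln u - q ln ln u)`, so `M_ε(u) = ⌊A(u)⌋`. Since
`ln ln u = o(ln u)`, `A(u) / (ln ln u)^{1/β} → c^β / 2`, and the same holds for `M_ε(u) + 1`
because `(ln ln u)^{1/β} → ∞`. Finally `(ln u)^{1/β} d_k(u) = (k / (ln ln u)^{1/β})^{1/β}`.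
-/

namespace Real

theorem tendsto_log_log_div_log_atTop :
    Tendsto (fun u => log (log u) / log u) atTop (nhds 0) :=
  isLittleO_log_id_atTop.tendsto_div_nhds_zero.comp tendsto_log_atTop

theorem eventually_one_lt_log_and_mul_log_log_lt (q : ℝ) :
    ∀ᶠ u in atTop, 1 < log u ∧ q * log (log u) < 2 * log u := by
  have hratio : ∀ᶠ u in atTop, q * (log (log u) / log u) < 2 := by
    simpa using (tendsto_log_log_div_log_atTop.const_mul q).eventually (gt_mem_nhds (by simp))
  filter_upwards [tendsto_log_atTop.eventually_gt_atTop 1, hratio] with u hlog hlt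
  refine ⟨hlog, ?_⟩
  rwa [← mul_div_assoc, div_lt_iff₀ (by linarith)] at hlt

end Real

open Real

noncomputable def dkCutoff (β c q u : ℝ) : ℝ :=
  c ^ β * (log u * log (log u) ^ (1 / β)) / (2 * log u - q * log (log u))

section

variable {β c q u : ℝ}

theorem dk_le_mul_delta1_iff (hβ : 0 < β) (hc : 0 < c) (hlog : 1 < log u)
    (hq : q * log (log u) < 2 * log u) (k : ℕ) :
    dk β u k ≤ c * delta1 β q u ↔ (k : ℝ) ≤ dkCutoff β c q u := by
  have hloglog : 0 < log (log u) := log_pos hlog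
  have hD : 0 < 2 * log u - q * log (log u) := by linarith
  have hcβ : c = (c ^ β) ^ (1 / β) := by rw [one_div, rpow_rpow_inv hc.le hβ.ne']
  have hrhs : c * delta1 β q u = (c ^ β / (2 * log u - q * log (log u))) ^ (1 / β) := by
    rw [delta1, hcβ, ← mul_rpow (by positivity) (by positivity), ← hcβ, mul_one_div]
  rw [dk, hrhs, rpow_le_rpow_iff (by positivity) (by positivity) (by positivity),
    div_le_div_iff₀ (by positivity) hD, dkCutoff, le_div_iff₀ hD]

theorem log_rpow_mul_dk (hlog : 1 < log u) (k : ℕ) :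
    log u ^ (1 / β) * dk β u k = ((k : ℝ) / log (log u) ^ (1 / β)) ^ (1 / β) := by
  have hloglog : 0 < log (log u) := log_pos hlog
  rw [dk, ← mul_rpow (by positivity) (by positivity)]
  congr 1
  field_simp

theorem tendsto_dkCutoff_div (c q : ℝ) :
    Tendsto (fun u => dkCutoff β c q u / log (log u) ^ (1 / β)) atTop (nhds (c ^ β / 2)) := by
  have hlim : Tendsto (fun u => c ^ β / (2 - q * (log (log u) / log u))) atTop
      (nhds (c ^ β / 2)) := by
    have hden : Tendsto (fun u => 2 - q * (log (log u) / log u)) atTop (nhds 2) := by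
      simpa using tendsto_const_nhds.sub (tendsto_log_log_div_log_atTop.const_mul q)
    exact tendsto_const_nhds.div hden two_ne_zero
  refine hlim.congr' ?_
  filter_upwards [eventually_one_lt_log_and_mul_log_log_lt q] with u ⟨hlog, hq⟩
  have hloglog : 0 < log (log u) := log_pos hlog
  have hD : 0 < 2 * log u - q * log (log u) := by linarith
  rw [dkCutoff]
  field_simp

end

theorem lt_add_one_of_isGreatest_natCast_le {α : Type*} [Semiring α] [LinearOrder α]
    [IsStrictOrderedRing α] {A : α} {m : ℕ} (h : IsGreatest {k : ℕ | (k : α) ≤ A} m) :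
    A < m + 1 := by
  by_contra! hle
  have := h.2 (show m + 1 ∈ {k : ℕ | (k : α) ≤ A} by simpa using hle)
  omega

theorem tendsto_add_one_div_of_le_of_lt {ι : Type*} {l : Filter ι} {m A g : ι → ℝ} {a : ℝ}
    (hA : Tendsto (fun i => A i / g i) l (nhds a)) (hg : Tendsto g l atTop)
    (hle : ∀ᶠ i in l, m i ≤ A i) (hlt : ∀ᶠ i in l, A i < m i + 1) :
    Tendsto (fun i => (m i + 1) / g i) l (nhds a) := by
  have hup : Tendsto (fun i => A i / g i + 1 / g i) l (nhds a) := by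
    simpa [one_div] using hA.add hg.inv_tendsto_atTop
  refine tendsto_of_tendsto_of_tendsto_of_le_of_le' hA hup ?_ ?_
  · filter_upwards [hlt, hg.eventually_gt_atTop 0] with i hi hgi
    gcongr
  · filter_upwards [hle, hg.eventually_gt_atTop 0] with i hi hgi
    rw [← add_div]
    gcongr

theorem log_dM_tendsto_general (β ε q : ℝ) (hβ : 0 < β) (hε1 : ε < 1)
    (M : ℝ → ℕ)
    (hM : ∀ᶠ u in atTop,
      IsGreatest {k : ℕ | dk β u k ≤ (1 - ε) * delta1 β q u} (M u)) :
    Tendsto (fun u : ℝ => Real.log u ^ (1 / β) * dk β u (M u + 1)) atTop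
      (nhds ((1 - ε) * 2 ^ (-(1 / β)))) := by
  have hc : 0 < 1 - ε := by linarith
  have hMcut : ∀ᶠ u in atTop, IsGreatest {k : ℕ | (k : ℝ) ≤ dkCutoff β (1 - ε) q u} (M u) := by
    filter_upwards [hM, eventually_one_lt_log_and_mul_log_log_lt q] with u hMu ⟨hlog, hq⟩
    simpa only [dk_le_mul_delta1_iff hβ hc hlog hq] using hMu
  have hlim : Tendsto (fun u => ((M u : ℝ) + 1) / log (log u) ^ (1 / β)) atTop
      (nhds ((1 - ε) ^ β / 2)) :=
    tendsto_add_one_div_of_le_of_lt (tendsto_dkCutoff_div _ q)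
      ((tendsto_rpow_atTop (by positivity)).comp (tendsto_log_atTop.comp tendsto_log_atTop))
      (hMcut.mono fun _ h => h.1) (hMcut.mono fun _ h => lt_add_one_of_isGreatest_natCast_le h)
  have hval : ((1 - ε) ^ β / 2) ^ (1 / β) = (1 - ε) * 2 ^ (-(1 / β)) := by
    rw [div_rpow (by positivity) zero_le_two, one_div, rpow_rpow_inv hc.le hβ.ne',
      rpow_neg zero_le_two, div_eq_mul_inv]
  rw [← hval]
  refine ((continuousAt_rpow_const _ _ (Or.inr (by positivity))).tendsto.comp hlim).congr' ?_
  filter_upwards [tendsto_log_atTop.eventually_gt_atTop 1] with u hlog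
  simpa using (log_rpow_mul_dk hlog (M u + 1)).symm

theorem log_dM_tendsto (β ε q : ℝ) (hβ : 0 < β) (hε0 : 0 < ε) (hε1 : ε < 1) (hq : 1 < q)
    (M : ℝ → ℕ)
    (hM : ∀ᶠ u in atTop,
      IsGreatest {k : ℕ | dk β u k ≤ (1 - ε) * delta1 β q u} (M u)) :
    Tendsto (fun u : ℝ => Real.log u ^ (1 / β) * dk β u (M u + 1)) atTop
      (nhds ((1 - ε) * 2 ^ (-(1 / β)))) :=
  log_dM_tendsto_general β ε q hβ hε1 M hM
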